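/- Let Ω, λ, u, α, θ₀, h, Γ_h^−, Γ_h^+, ν⁺ be as in the context. Suppose Γ_h^− is a nodal line of u, i.e., u(x) = 0 for all x ∈ Γ_h^−, and there is a continuously differentiable (C¹) function η₂ : Γ_h^+ → ℂ with ∇u(x)·ν⁺ + η₂(x)·u(x) = 0 for all x ∈ Γ_h^+. If α ∉ {1/4, 1/2, 3/4}, then u vanishes at 0 up to order 3, i.e., u(0) = 0, ∇u(0) = 0, and all second-order partial derivatives of u vanish at 0. -/

import Mathlib

/-!
Let `B` be the Hessian of `u` at the corner, `e₁, e₂` the standard basis, `τ = (cos θ₀, sin θ₀)`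
and `ν = (-sin θ₀, cos θ₀)`. Since `u` vanishes on `Γ_h^−`, `u(0) = 0`, `∂₁u = 0` along `Γ_h^−` and
`B(e₁, e₁) = 0`. At `r = 0` the boundary condition reads `∂_ν u(0) = 0`, so `∇u(0) = 0` as `e₁`
and `ν` are independent (`cos θ₀ ≠ 0`). The equation at `0` makes `B` trace free, so
`B(e₂, e₂) = 0`. Along `Γ_h^+` the term `η₂ u` is `o(r)`, because `η₂` is continuous and `u`
vanishes to first order at `0`; differentiating the boundary condition at `r = 0` therefore gives
`B(τ, ν) = 0`. For the symmetric `B` this is `cos (2θ₀) B(e₁, e₂) = 0`, and `cos (2θ₀) ≠ 0`.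
-/

/-- First partial derivative of `u : ℝ × ℝ → ℂ` in the `x₁` direction. -/
noncomputable def pd1 (u : ℝ × ℝ → ℂ) : ℝ × ℝ → ℂ := fun x => fderiv ℝ u x (1, 0)

/-- First partial derivative of `u : ℝ × ℝ → ℂ` in the `x₂` direction. -/
noncomputable def pd2 (u : ℝ × ℝ → ℂ) : ℝ × ℝ → ℂ := fun x => fderiv ℝ u x (0, 1)

open Set Real

theorem cos_mul_pi_ne_zero {x : ℝ} (h0 : 0 < x) (h2 : x < 2) (h12 : x ≠ 1 / 2)
    (h32 : x ≠ 3 / 2) : cos (x * π) ≠ 0 := by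
  rw [cos_ne_zero_iff]
  intro k hk
  have hx : x = (2 * k + 1) / 2 := mul_right_cancel₀ pi_ne_zero (by rw [hk]; ring)
  have hk0 : -1 < k := by exact_mod_cast (by linarith : (-1 : ℝ) < k)
  have hk1 : k < 2 := by exact_mod_cast (by linarith : (k : ℝ) < 2)
  obtain rfl | rfl : k = 0 ∨ k = 1 := by omega
  · exact h12 (by norm_num [hx])
  · exact h32 (by norm_num [hx])

theorem cos_sq_sub_sin_sq_mul_pi_ne_zero {x : ℝ} (h0 : 0 < x) (h1 : x < 1) (h14 : x ≠ 1 / 4)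
    (h34 : x ≠ 3 / 4) : cos (x * π) ^ 2 - sin (x * π) ^ 2 ≠ 0 := by
  rw [← cos_two_mul', ← mul_assoc]
  exact cos_mul_pi_ne_zero (by linarith) (by linarith) (by contrapose! h14; linarith)
    (by contrapose! h34; linarith)

section

variable {𝕜 E F : Type*} [NontriviallyNormedField 𝕜] [NormedAddCommGroup E] [NormedSpace 𝕜 E]
  [NormedAddCommGroup F] [NormedSpace 𝕜 F]

theorem HasFDerivAt.comp_smul_const {f : E → F} {L : E →L[𝕜] F} {v : E} {t : 𝕜}
    (hf : HasFDerivAt f L (t • v)) : HasDerivAt (fun r : 𝕜 => f (r • v)) (L v) t :=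
  hf.comp_hasDerivAt t (by simpa using (hasDerivAt_id t).smul_const v)

theorem HasFDerivAt.apply_eq_of_hasDerivWithinAt_smul {f : E → F} {L : E →L[𝕜] F} {v : E}
    {s : Set 𝕜} {t : 𝕜} {c : F} (hf : HasFDerivAt f L (t • v)) (hs : UniqueDiffWithinAt 𝕜 s t)
    (hc : HasDerivWithinAt (fun r : 𝕜 => f (r • v)) c s t) : L v = c :=
  hs.eq_deriv s hf.comp_smul_const.hasDerivWithinAt hc

theorem HasFDerivAt.apply_eq_zero_of_smul_eq_zero {f : E → F} {L : E →L[𝕜] F} {v : E}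
    {s : Set 𝕜} {t : 𝕜} (hf : HasFDerivAt f L (t • v)) (hs : UniqueDiffWithinAt 𝕜 s t)
    (ht : t ∈ s) (hzero : ∀ r ∈ s, f (r • v) = 0) : L v = 0 :=
  hf.apply_eq_of_hasDerivWithinAt_smul hs
    ((hasDerivWithinAt_const t s 0).congr hzero (hzero t ht))

theorem hasFDerivAt_fderiv_apply {f : E → F} {x : E} (v : E)
    (hf : DifferentiableAt 𝕜 (fderiv 𝕜 f) x) :
    HasFDerivAt (fun y => fderiv 𝕜 f y v) ((fderiv 𝕜 (fderiv 𝕜 f) x).flip v) x :=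
  (ContinuousLinearMap.apply 𝕜 F v).hasFDerivAt.comp x hf.hasFDerivAt

theorem iteratedFDeriv_eq_zero_of_lt_three {f : E → F} {x : E} (h₀ : f x = 0)
    (h₁ : fderiv 𝕜 f x = 0) (h₂ : fderiv 𝕜 (fderiv 𝕜 f) x = 0) :
    ∀ k < 3, iteratedFDeriv 𝕜 k f x = 0 := by
  intro k hk
  ext m
  interval_cases k
  · simp [iteratedFDeriv_zero_apply, h₀]
  · simp [iteratedFDeriv_one_apply, h₁]
  · simp [iteratedFDeriv_two_apply, h₂]

end

theorem hasDerivWithinAt_zero_of_add_mul_eq_zero {𝕜 𝔸 : Type*} [NontriviallyNormedField 𝕜]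
    [NormedRing 𝔸] [NormedAlgebra 𝕜 𝔸] {g η φ : 𝕜 → 𝔸} {s : Set 𝕜} {x : 𝕜}
    (hg : ∀ r ∈ s, g r + η r * φ r = 0) (hx : x ∈ s) (hη : ContinuousWithinAt η s x)
    (hφ : HasDerivWithinAt φ 0 s x) (hφx : φ x = 0) : HasDerivWithinAt g 0 s x := by
  have hηφ : HasDerivWithinAt (fun r => η r * φ r) 0 s x := by
    rw [hasDerivWithinAt_iff_isLittleO] at hφ ⊢
    simp only [hφx, sub_zero, smul_zero, mul_zero] at hφ ⊢
    simpa using (hη.isBigO_one 𝕜).mul_isLittleO hφ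
  simpa using hηφ.neg.congr (fun r hr => eq_neg_of_add_eq_zero_left (hg r hr))
    (eq_neg_of_add_eq_zero_left (hg x hx))

theorem hasDerivWithinAt_fderiv_apply_of_add_mul_eq_zero {E 𝔸 : Type*} [NormedAddCommGroup E]
    [NormedSpace ℝ E] [NormedRing 𝔸] [NormedAlgebra ℝ 𝔸] {u η : E → 𝔸} {v w : E} {s : Set ℝ}
    (hu : HasFDerivAt u (0 : E →L[ℝ] 𝔸) 0) (hu0 : u 0 = 0) (h0 : 0 ∈ s)
    (hη : ContinuousWithinAt (fun r : ℝ => η (r • v)) s 0)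
    (hbc : ∀ r ∈ s, fderiv ℝ u (r • v) w + η (r • v) * u (r • v) = 0) :
    HasDerivWithinAt (fun r : ℝ => fderiv ℝ u (r • v) w) 0 s 0 := by
  rw [← zero_smul ℝ v] at hu hu0
  simpa using hasDerivWithinAt_zero_of_add_mul_eq_zero hbc h0 hη
    hu.comp_smul_const.hasDerivWithinAt hu0

theorem Prod.mk_eq_smul_add_smul {R : Type*} [Semiring R] (a b : R) :
    ((a, b) : R × R) = a • (1, 0) + b • (0, 1) := by
  ext <;> simp

section

variable {𝕜 M : Type*} [NontriviallyNormedField 𝕜] [NormedAddCommGroup M] [NormedSpace 𝕜 M]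

theorem ContinuousLinearMap.eq_zero_of_apply_mk (L : 𝕜 × 𝕜 →L[𝕜] M) (h₁ : L (1, 0) = 0)
    (h₂ : L (0, 1) = 0) : L = 0 := by
  refine ContinuousLinearMap.ext fun ⟨a, b⟩ => ?_
  rw [Prod.mk_eq_smul_add_smul a b, map_add, map_smul, map_smul, h₁, h₂]
  simp

theorem ContinuousLinearMap.apply_rotate (B : 𝕜 × 𝕜 →L[𝕜] 𝕜 × 𝕜 →L[𝕜] M)
    (hB : B (1, 0) (0, 1) = B (0, 1) (1, 0)) (c s : 𝕜) :
    B (c, s) (-s, c) =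
      (c ^ 2 - s ^ 2) • B (1, 0) (0, 1) + (c * s) • (B (0, 1) (0, 1) - B (1, 0) (1, 0)) := by
  rw [Prod.mk_eq_smul_add_smul c s, Prod.mk_eq_smul_add_smul (-s) c]
  simp only [map_add, map_smul, add_apply, smul_apply]
  rw [← hB]
  module

theorem ContinuousLinearMap.eq_zero_of_apply_one_zero_of_apply_neg_mk (L : 𝕜 × 𝕜 →L[𝕜] M)
    {c s : 𝕜} (hc : c ≠ 0) (h₁ : L (1, 0) = 0) (hν : L (-s, c) = 0) : L = 0 := by
  refine L.eq_zero_of_apply_mk h₁ ?_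
  rw [Prod.mk_eq_smul_add_smul, map_add, map_smul, map_smul, h₁, smul_zero, zero_add] at hν
  exact (smul_eq_zero.1 hν).resolve_left hc

end

theorem pd1_pd1_add_pd2_pd2 {u : ℝ × ℝ → ℂ} {x : ℝ × ℝ}
    (hu : DifferentiableAt ℝ (fderiv ℝ u) x) :
    pd1 (pd1 u) x + pd2 (pd2 u) x =
      fderiv ℝ (fderiv ℝ u) x (1, 0) (1, 0) + fderiv ℝ (fderiv ℝ u) x (0, 1) (0, 1) := by
  change fderiv ℝ (fun y => fderiv ℝ u y (1, 0)) x (1, 0)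
    + fderiv ℝ (fun y => fderiv ℝ u y (0, 1)) x (0, 1) = _
  rw [(hasFDerivAt_fderiv_apply _ hu).fderiv, (hasFDerivAt_fderiv_apply _ hu).fderiv]
  rfl

theorem fderiv_fderiv_eq_zero_of_corner {F : Type*} [NormedAddCommGroup F] [NormedSpace ℝ F]
    {u : ℝ × ℝ → F} {h θ : ℝ} (hu : ContDiffAt ℝ 2 u 0) (hh : 0 < h)
    (hnodal : ∀ r ∈ Icc 0 h, fderiv ℝ u (r • (1, 0)) (1, 0) = 0)
    (htrace : fderiv ℝ (fderiv ℝ u) 0 (1, 0) (1, 0) + fderiv ℝ (fderiv ℝ u) 0 (0, 1) (0, 1) = 0)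
    (hrobin : HasDerivWithinAt (fun r : ℝ => fderiv ℝ u (r • (cos θ, sin θ)) (-sin θ, cos θ))
      0 (Icc 0 h) 0)
    (hθ : cos θ ^ 2 - sin θ ^ 2 ≠ 0) : fderiv ℝ (fderiv ℝ u) 0 = 0 := by
  set B := fderiv ℝ (fderiv ℝ u) 0
  have hD : ∀ v w : ℝ × ℝ,
      HasFDerivAt (fun y => fderiv ℝ u y v) (B.flip v) ((0 : ℝ) • w) := by
    intro v w
    rw [zero_smul]
    exact hasFDerivAt_fderiv_apply v ((hu.fderiv_right le_rfl).differentiableAt one_ne_zero)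
  have h0 : (0 : ℝ) ∈ Icc 0 h := ⟨le_rfl, hh.le⟩
  have h₁₁ : B (1, 0) (1, 0) = 0 :=
    (hD _ _).apply_eq_zero_of_smul_eq_zero (uniqueDiffOn_Icc hh 0 h0) h0 hnodal
  have h₂₂ : B (0, 1) (0, 1) = 0 := by rwa [h₁₁, zero_add] at htrace
  have hsymm : B (1, 0) (0, 1) = B (0, 1) (1, 0) := hu.isSymmSndFDerivAt (by simp) _ _
  have hτν : B (cos θ, sin θ) (-sin θ, cos θ) = 0 :=
    (hD _ _).apply_eq_of_hasDerivWithinAt_smul (uniqueDiffOn_Icc hh 0 h0) hrobin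
  rw [B.apply_rotate hsymm, h₁₁, h₂₂, sub_zero, smul_zero, add_zero] at hτν
  have h₁₂ : B (1, 0) (0, 1) = 0 := (smul_eq_zero.1 hτν).resolve_left hθ
  refine B.eq_zero_of_apply_mk ((B (1, 0)).eq_zero_of_apply_mk h₁₁ h₁₂) ?_
  exact (B (0, 1)).eq_zero_of_apply_mk (hsymm ▸ h₁₂) h₂₂

theorem stmt14_general
    (Ω : Set (ℝ × ℝ))
    (lam : ℝ)
    (u : ℝ × ℝ → ℂ)
    (hu_an : AnalyticOnNhd ℝ u Ω)
    (hu_eq : ∀ x ∈ Ω, pd1 (pd1 u) x + pd2 (pd2 u) x + (lam : ℂ) * u x = 0)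
    (α : ℝ) (hα : α ∈ Set.Ioo (0 : ℝ) 1)
    (θ₀ : ℝ) (hθ₀ : θ₀ = α * Real.pi)
    (h : ℝ) (hh : 0 < h)
    (hdisk : ∀ x : ℝ × ℝ, x.1 ^ 2 + x.2 ^ 2 ≤ h ^ 2 → x ∈ Ω)
    (hnodal_m : ∀ r : ℝ, 0 ≤ r → r ≤ h → u (r, 0) = 0)
    (η₂ : ℝ × ℝ → ℂ)
    (hη₂ : ContDiffOn ℝ 1 η₂
      {p : ℝ × ℝ | ∃ r : ℝ, 0 ≤ r ∧ r ≤ h ∧ p = (r * Real.cos θ₀, r * Real.sin θ₀)})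
    (hbc₂ : ∀ r : ℝ, 0 ≤ r → r ≤ h →
      fderiv ℝ u (r * Real.cos θ₀, r * Real.sin θ₀) (-Real.sin θ₀, Real.cos θ₀)
        + η₂ (r * Real.cos θ₀, r * Real.sin θ₀) * u (r * Real.cos θ₀, r * Real.sin θ₀) = 0)
    (hα4 : α ≠ 1 / 4) (hα2 : α ≠ 1 / 2) (hα34 : α ≠ 3 / 4) :
    ∀ k : ℕ, k < 3 → iteratedFDeriv ℝ k u (0, 0) = 0 := by
  obtain ⟨hα0, hα1⟩ := hα
  have hcos : cos θ₀ ≠ 0 := hθ₀ ▸ cos_mul_pi_ne_zero hα0 (by linarith) hα2 (by linarith)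
  have hcos2 : cos θ₀ ^ 2 - sin θ₀ ^ 2 ≠ 0 :=
    hθ₀ ▸ cos_sq_sub_sin_sq_mul_pi_ne_zero hα0 hα1 hα4 hα34
  set τ : ℝ × ℝ := (cos θ₀, sin θ₀)
  have h0 : (0 : ℝ) ∈ Icc 0 h := ⟨le_rfl, hh.le⟩
  have hray : ∀ v : ℝ × ℝ, v.1 ^ 2 + v.2 ^ 2 = 1 → ∀ r ∈ Icc 0 h, r • v ∈ Ω := fun v hv r hr =>
    hdisk _ (by
      simp only [Prod.smul_fst, Prod.smul_snd, smul_eq_mul]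
      nlinarith [hr.1, hr.2, congrArg (r ^ 2 * ·) hv])
  have h0Ω : (0 : ℝ × ℝ) ∈ Ω := by simpa using hray (1, 0) (by norm_num) 0 h0
  have hC2 : ContDiffAt ℝ 2 u 0 := (hu_an 0 h0Ω).contDiffAt
  have hnodal : ∀ r ∈ Icc 0 h, fderiv ℝ u (r • (1, 0)) (1, 0) = 0 := fun r hr =>
    (hu_an _ (hray (1, 0) (by norm_num) r hr)).differentiableAt.hasFDerivAt
      |>.apply_eq_zero_of_smul_eq_zero (uniqueDiffOn_Icc hh r hr) hr
        fun r hr => by simpa using hnodal_m r hr.1 hr.2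
  have hu0 : u 0 = 0 := hnodal_m 0 le_rfl hh.le
  have hbc : ∀ r ∈ Icc 0 h,
      fderiv ℝ u (r • τ) (-sin θ₀, cos θ₀) + η₂ (r • τ) * u (r • τ) = 0 :=
    fun r hr => by simpa [τ] using hbc₂ r hr.1 hr.2
  have hDu : fderiv ℝ u 0 = 0 := (fderiv ℝ u 0).eq_zero_of_apply_one_zero_of_apply_neg_mk hcos
    (by simpa using hnodal 0 h0) (by simpa [hu0] using hbc 0 h0)
  have hη : ContinuousWithinAt (fun r : ℝ => η₂ (r • τ)) (Icc 0 h) 0 :=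
    (hη₂.continuousOn.comp (by fun_prop : Continuous fun r : ℝ => r • τ).continuousOn
      fun r hr => ⟨r, hr.1, hr.2, by simp [τ]⟩) 0 h0
  have hrobin := hasDerivWithinAt_fderiv_apply_of_add_mul_eq_zero
    (hDu ▸ (hC2.differentiableAt (by norm_num)).hasFDerivAt) hu0 h0 hη hbc
  have htrace :
      fderiv ℝ (fderiv ℝ u) 0 (1, 0) (1, 0) + fderiv ℝ (fderiv ℝ u) 0 (0, 1) (0, 1) = 0 := by
    have hD := (hC2.fderiv_right le_rfl).differentiableAt one_ne_zero
    simpa [pd1_pd1_add_pd2_pd2 hD, hu0] using hu_eq 0 h0Ω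
  exact iteratedFDeriv_eq_zero_of_lt_three hu0 hDu
    (fderiv_fderiv_eq_zero_of_corner hC2 hh hnodal htrace hrobin hcos2)

/-- A nodal line `Γ_h^−` and a generalized singular line `Γ_h^+` with a `C¹` parameter `η₂`,
intersecting at the origin at angle `θ₀ = απ` with `α ∉ {1/4, 1/2, 3/4}`: the eigenfunction
vanishes at `0` up to order `3`. -/
theorem stmt14
    (Ω : Set (ℝ × ℝ)) (hΩ : IsOpen Ω)
    (lam : ℝ) (hlam : 0 < lam)
    (u : ℝ × ℝ → ℂ)
    (hu_an : AnalyticOnNhd ℝ u Ω)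
    (hu_eq : ∀ x ∈ Ω, pd1 (pd1 u) x + pd2 (pd2 u) x + (lam : ℂ) * u x = 0)
    (α : ℝ) (hα : α ∈ Set.Ioo (0 : ℝ) 1)
    (θ₀ : ℝ) (hθ₀ : θ₀ = α * Real.pi)
    (h : ℝ) (hh : 0 < h)
    (hdisk : ∀ x : ℝ × ℝ, x.1 ^ 2 + x.2 ^ 2 ≤ h ^ 2 → x ∈ Ω)
    (hnodal_m : ∀ r : ℝ, 0 ≤ r → r ≤ h → u (r, 0) = 0)
    (η₂ : ℝ × ℝ → ℂ)
    (hη₂ : ContDiffOn ℝ 1 η₂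
      {p : ℝ × ℝ | ∃ r : ℝ, 0 ≤ r ∧ r ≤ h ∧ p = (r * Real.cos θ₀, r * Real.sin θ₀)})
    (hbc₂ : ∀ r : ℝ, 0 ≤ r → r ≤ h →
      fderiv ℝ u (r * Real.cos θ₀, r * Real.sin θ₀) (-Real.sin θ₀, Real.cos θ₀)
        + η₂ (r * Real.cos θ₀, r * Real.sin θ₀) * u (r * Real.cos θ₀, r * Real.sin θ₀) = 0)
    (hα4 : α ≠ 1 / 4) (hα2 : α ≠ 1 / 2) (hα34 : α ≠ 3 / 4) :
    ∀ k : ℕ, k < 3 → iteratedFDeriv ℝ k u (0, 0) = 0 :=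
  stmt14_general Ω lam u hu_an hu_eq α hα θ₀ hθ₀ h hh hdisk hnodal_m η₂ hη₂ hbc₂ hα4 hα2 hα34
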